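/- arXiv:2602.01380 — 2 statements merged into one kernel-verified Lean document; each statement's English description precedes it below -/
import Mathlib

section
/- Let K be a field of characteristic zero, let G(x) = x⁴ − 2x³ + 2x² + 2x + 1, and let t ∈ K with t ≠ 0 be such that G(t) and G(−t) are both squares in K. Set s = t − 1/t and r = s². Then (r + 4)(r² + 4r + 16) is a square in K and r(r² + 4r + 16) is a square in K. -/
/-- The quartic `G(x) = x⁴ - 2x³ + 2x² + 2x + 1`, evaluated at `t`. -/
def Gpoly {K : Type*} [Field K] (t : K) : K :=
  t ^ 4 - 2 * t ^ 3 + 2 * t ^ 2 + 2 * t + 1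

theorem stmt13 (K : Type*) [Field K] [CharZero K] (t : K) (ht : t ≠ 0)
    (hGt : ∃ u : K, u ^ 2 = Gpoly t) (hGnt : ∃ v : K, v ^ 2 = Gpoly (-t)) :
    ∀ s r : K, s = t - 1 / t → r = s ^ 2 →
      (∃ u : K, (r + 4) * (r ^ 2 + 4 * r + 16) = u ^ 2) ∧
      (∃ v : K, r * (r ^ 2 + 4 * r + 16) = v ^ 2) := by
  obtain ⟨u, hu⟩ := hGt
  obtain ⟨v, hv⟩ := hGnt
  unfold Gpoly at hu hv
  intro s r hs hr
  have ha : (u / t) ^ 2 = s ^ 2 - 2 * s + 4 := by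
    rw [div_pow, hu, hs]; field_simp; ring
  have hb : (v / t) ^ 2 = s ^ 2 + 2 * s + 4 := by
    rw [div_pow, hv, hs]; field_simp; ring
  have h4 : (t + 1 / t) ^ 2 = s ^ 2 + 4 := by
    rw [hs]; field_simp; ring
  constructor
  · refine ⟨(t + 1 / t) * (u / t) * (v / t), ?_⟩
    have hx : ((t + 1 / t) * (u / t) * (v / t)) ^ 2
        = (t + 1 / t) ^ 2 * ((u / t) ^ 2 * (v / t) ^ 2) := by ring
    rw [hx, ha, hb, h4, hr]; ring
  · refine ⟨s * (u / t) * (v / t), ?_⟩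
    have hx : (s * (u / t) * (v / t)) ^ 2
        = s ^ 2 * ((u / t) ^ 2 * (v / t) ^ 2) := by ring
    rw [hx, ha, hb, hr]; ring
end

section
/- The 6-tuple (49, 169, 289, 409, 529, 649) is a non-constant arithmetic progression of six squares properly defined over the number field K = ℚ(√409, √649), which is a quadratic extension of ℚ(√409): its consecutive differences all equal 120, its terms are the squares of 7, 13, 17, √409, 23, √649 ∈ K, and the set {7, 13, 17, √409, 23, √649} is not contained in any proper subfield of K. -/
open IntermediateField

noncomputable section

/-- The number field `K = ℚ(√409, √649)`, realized inside `ℝ`. -/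
def K409649 : IntermediateField ℚ ℝ :=
  IntermediateField.adjoin ℚ {Real.sqrt 409, Real.sqrt 649}

section Aux

open Polynomial

private theorem irr409' : Irrational (Real.sqrt 409) := by
  rw [show (409:ℝ) = (409:ℕ) by norm_num]
  exact (Nat.Prime.irrational_sqrt (by norm_num))

private theorem irr649' : Irrational (Real.sqrt 649) := by
  rw [show (649:ℝ) = (649:ℕ) by norm_num, irrational_sqrt_natCast_iff]
  rintro ⟨r, hr⟩
  have h1 : r < 26 := by nlinarith
  interval_cases r <;> omega

private theorem irr265441' : Irrational (Real.sqrt 265441) := by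
  rw [show (265441:ℝ) = (265441:ℕ) by norm_num, irrational_sqrt_natCast_iff]
  rintro ⟨r, hr⟩
  have h1 : r < 516 := by nlinarith
  have h2 : 515 < r := by nlinarith
  omega

private theorem sq409' : Real.sqrt 409 ^ 2 = 409 := Real.sq_sqrt (by norm_num)

private theorem nz409' {p q : ℚ} (h : ¬(p = 0 ∧ q = 0)) :
    (p:ℝ)^2 - 409 * (q:ℝ)^2 ≠ 0 := by
  intro he
  rcases eq_or_ne q 0 with hq | hq
  · subst hq
    simp at he
    exact h ⟨he, rfl⟩
  · have hq' : (q:ℝ) ≠ 0 := by exact_mod_cast hq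
    have h2 : ((p/q : ℚ) : ℝ)^2 = 409 := by
      push_cast
      field_simp
      linarith
    have h3 : Real.sqrt 409 = |(p/q : ℚ)| := by
      rw [← h2, Real.sqrt_sq_eq_abs]
      push_cast [abs_div]
      rfl
    exact irr409' ⟨|p/q|, by exact_mod_cast h3.symm⟩

private theorem nzlin409' {p q : ℚ} (h : ¬(p = 0 ∧ q = 0)) :
    (p:ℝ) + q * Real.sqrt 409 ≠ 0 := by
  intro h0
  rcases eq_or_ne q 0 with hq | hq
  · subst hq
    simp at h0
    exact h ⟨by exact_mod_cast h0, rfl⟩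
  · have hq' : (q:ℝ) ≠ 0 := by exact_mod_cast hq
    have : Real.sqrt 409 = ((-p/q : ℚ) : ℝ) := by
      push_cast
      field_simp
      linarith
    exact irr409' ⟨-p/q, this.symm⟩

private theorem rep409' {x : ℝ} (hx : x ∈ ℚ⟮Real.sqrt 409⟯) :
    ∃ p q : ℚ, x = p + q * Real.sqrt 409 := by
  induction hx using IntermediateField.adjoin_induction with
  | mem y hy =>
    rcases hy with rfl
    exact ⟨0, 1, by simp⟩
  | algebraMap r => exact ⟨r, 0, by simp⟩
  | add y z hy hz ihy ihz =>
    obtain ⟨p, q, rfl⟩ := ihy; obtain ⟨p', q', rfl⟩ := ihz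
    exact ⟨p + p', q + q', by push_cast; ring⟩
  | mul y z hy hz ihy ihz =>
    obtain ⟨p, q, rfl⟩ := ihy; obtain ⟨p', q', rfl⟩ := ihz
    refine ⟨p * p' + 409 * (q * q'), p * q' + q * p', ?_⟩
    push_cast
    linear_combination (q * q' : ℝ) * sq409'
  | inv y hy ihy =>
    obtain ⟨p, q, rfl⟩ := ihy
    rcases Classical.em (p = 0 ∧ q = 0) with ⟨rfl, rfl⟩ | h
    · exact ⟨0, 0, by simp⟩
    · have hd := nz409' h
      have hne := nzlin409' h
      refine ⟨p / (p^2 - 409*q^2), -q / (p^2 - 409*q^2), ?_⟩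
      apply inv_eq_of_mul_eq_one_right
      push_cast
      calc _ = ((p:ℝ)^2 - (q:ℝ)^2 * Real.sqrt 409 ^ 2) / ((p:ℝ)^2 - 409*(q:ℝ)^2) := by ring
        _ = 1 := by
          rw [sq409', show (p:ℝ)^2 - (q:ℝ)^2*409 = (p:ℝ)^2 - 409*(q:ℝ)^2 by ring]
          exact div_self hd

private theorem int409' : IsIntegral ℚ (Real.sqrt 409) :=
  ⟨X^2 - C 409, monic_X_pow_sub_C _ (by norm_num), by simp [sq409']⟩

private theorem sqrt649_notin' : Real.sqrt 649 ∉ ℚ⟮Real.sqrt 409⟯ := by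
  intro hm
  obtain ⟨p, q, hpq⟩ := rep409' hm
  have h649 : Real.sqrt 649 ^ 2 = 649 := Real.sq_sqrt (by norm_num)
  have hexp : (p:ℝ)^2 + 409 * q^2 + 2*p*q * Real.sqrt 409 = 649 := by
    rw [← h649, hpq]; linear_combination (-(q:ℝ)^2) * sq409'
  rcases eq_or_ne q 0 with hq | hq
  · subst hq
    simp at hpq
    exact irr649' ⟨p, hpq.symm⟩
  · rcases eq_or_ne p 0 with hp | hp
    · subst hp
      simp only [Rat.cast_zero, zero_add] at hpq
      have : Real.sqrt 265441 = ((409 * q : ℚ) : ℝ) := by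
        have h1 : Real.sqrt 265441 = Real.sqrt 409 * Real.sqrt 649 := by
          rw [← Real.sqrt_mul (by norm_num : (0:ℝ) ≤ 409)]; norm_num
        rw [h1, hpq]
        push_cast
        linear_combination (q:ℝ) * sq409'
      exact irr265441' ⟨409 * q, this.symm⟩
    · have hpq' : (2*p*q : ℚ) ≠ 0 := by
        simp [hp, hq]
      have hr : Real.sqrt 409 = (((649 - p^2 - 409*q^2)/(2*p*q) : ℚ) : ℝ) := by
        have h2 : ((2*p*q : ℚ) : ℝ) ≠ 0 := by exact_mod_cast hpq'
        push_cast
        field_simp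
        linarith
      exact irr409' ⟨_, hr.symm⟩

private theorem minpoly_natdeg_two' {F : Type*} [Field F] [Algebra F ℝ] (x : ℝ) (c : F)
    (hroot : (algebraMap F ℝ) c = x ^ 2)
    (hnotin : x ∉ (algebraMap F ℝ).range) :
    (minpoly F x).natDegree = 2 := by
  have hint : IsIntegral F x :=
    ⟨X^2 - C c, monic_X_pow_sub_C _ (by norm_num), by simp [hroot]⟩
  have hdvd : minpoly F x ∣ X^2 - C c := minpoly.dvd F x (by simp [hroot])
  have hne : (X^2 - C c : F[X]) ≠ 0 := by
    intro h
    have := congrArg natDegree h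
    rw [natDegree_X_pow_sub_C] at this
    simp at this
  have hle : (minpoly F x).natDegree ≤ 2 := by
    have := natDegree_le_of_dvd hdvd hne
    rwa [natDegree_X_pow_sub_C] at this
  have hpos : 0 < (minpoly F x).natDegree := minpoly.natDegree_pos hint
  have hne1 : (minpoly F x).natDegree ≠ 1 := by
    intro h1
    have hd : (minpoly F x).degree = 1 := by
      rw [degree_eq_natDegree (minpoly.ne_zero hint), h1]; rfl
    exact hnotin ((minpoly.degree_eq_one_iff).mp hd)
  omega

private theorem minpoly409_deg' : (minpoly ℚ (Real.sqrt 409)).natDegree = 2 := by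
  apply minpoly_natdeg_two' _ (409 : ℚ)
  · rw [sq409']; norm_num
  · rintro ⟨y, hy⟩
    exact irr409' ⟨y, hy⟩

private theorem finrank409' : Module.finrank ℚ ℚ⟮Real.sqrt 409⟯ = 2 := by
  rw [IntermediateField.adjoin.finrank int409', minpoly409_deg']

private theorem h649mem' : (649:ℝ) ∈ ℚ⟮Real.sqrt 409⟯ := by
  exact_mod_cast IntermediateField.algebraMap_mem ℚ⟮Real.sqrt 409⟯ (649:ℚ)

private theorem int649E' : IsIntegral ℚ⟮Real.sqrt 409⟯ (Real.sqrt 649) :=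
  ⟨X^2 - C (⟨(649:ℝ), h649mem'⟩ : ℚ⟮Real.sqrt 409⟯), monic_X_pow_sub_C _ (by norm_num), by
    simp [Real.sq_sqrt]⟩

private theorem minpoly649E_deg' :
    (minpoly ℚ⟮Real.sqrt 409⟯ (Real.sqrt 649)).natDegree = 2 := by
  apply minpoly_natdeg_two' _ ((⟨(649:ℝ), h649mem'⟩ : ℚ⟮Real.sqrt 409⟯))
  · simp [Real.sq_sqrt]
  · rintro ⟨y, hy⟩
    exact sqrt649_notin' (hy ▸ y.2)

private theorem finrankE' :
    Module.finrank ℚ⟮Real.sqrt 409⟯ (ℚ⟮Real.sqrt 409⟯⟮Real.sqrt 649⟯) = 2 := by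
  rw [IntermediateField.adjoin.finrank, minpoly649E_deg']
  exact int649E'

private theorem finrankK' : Module.finrank ℚ
    (IntermediateField.adjoin ℚ {Real.sqrt 409, Real.sqrt 649} : IntermediateField ℚ ℝ) = 4 := by
  have key := IntermediateField.adjoin_simple_adjoin_simple (F := ℚ) (E := ℝ)
      (α := Real.sqrt 409) (Real.sqrt 649)
  rw [show (IntermediateField.adjoin ℚ {Real.sqrt 409, Real.sqrt 649} : IntermediateField ℚ ℝ)
      = ℚ⟮Real.sqrt 409⟯⟮Real.sqrt 649⟯.restrictScalars ℚ from key.symm]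
  have h1 : Module.finrank ℚ (ℚ⟮Real.sqrt 409⟯⟮Real.sqrt 649⟯.restrictScalars ℚ)
      = Module.finrank ℚ ℚ⟮Real.sqrt 409⟯⟮Real.sqrt 649⟯ := rfl
  have hfd : FiniteDimensional ℚ⟮Real.sqrt 409⟯ ℚ⟮Real.sqrt 409⟯⟮Real.sqrt 649⟯ :=
    IntermediateField.adjoin.finiteDimensional int649E'
  rw [h1, ← Module.finrank_mul_finrank ℚ ℚ⟮Real.sqrt 409⟯ ℚ⟮Real.sqrt 409⟯⟮Real.sqrt 649⟯,
    finrank409', finrankE']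

private theorem Ftop' (h409 : Real.sqrt 409 ∈ K409649) (h649 : Real.sqrt 649 ∈ K409649)
    (F : Subfield K409649)
    (ha : (⟨Real.sqrt 409, h409⟩ : K409649) ∈ F)
    (hb : (⟨Real.sqrt 649, h649⟩ : K409649) ∈ F) : F = ⊤ := by
  let E : IntermediateField ℚ ℝ :=
    Subfield.toIntermediateField (F.map (algebraMap K409649 ℝ)) (by
      intro q
      refine ⟨algebraMap ℚ K409649 q, ?_, (IsScalarTower.algebraMap_apply ℚ K409649 ℝ q).symm⟩
      rw [eq_ratCast (algebraMap ℚ K409649) q]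
      exact SubfieldClass.ratCast_mem F q)
  have hKE : K409649 ≤ E := by
    rw [show K409649 = IntermediateField.adjoin ℚ {Real.sqrt 409, Real.sqrt 649} from rfl,
      IntermediateField.adjoin_le_iff]
    rintro x (rfl | rfl)
    · exact ⟨⟨Real.sqrt 409, h409⟩, ha, rfl⟩
    · exact ⟨⟨Real.sqrt 649, h649⟩, hb, rfl⟩
  ext x
  simp only [Subfield.mem_top, iff_true]
  obtain ⟨y, hyF, hy⟩ := hKE x.2
  have : y = x := Subtype.ext hy
  rwa [← this]

end Aux

theorem stmt19 :
    ∃ (h409 : Real.sqrt 409 ∈ K409649) (h649 : Real.sqrt 649 ∈ K409649),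
      -- the terms are the squares of 7, 13, 17, √409, 23, √649
      ((7 : ℝ) ^ 2 = 49 ∧ (13 : ℝ) ^ 2 = 169 ∧ (17 : ℝ) ^ 2 = 289 ∧
        Real.sqrt 409 ^ 2 = 409 ∧ (23 : ℝ) ^ 2 = 529 ∧ Real.sqrt 649 ^ 2 = 649) ∧
      -- consecutive differences all equal 120
      ((169 : ℝ) - 49 = 120 ∧ (289 : ℝ) - 169 = 120 ∧ (409 : ℝ) - 289 = 120 ∧
        (529 : ℝ) - 409 = 120 ∧ (649 : ℝ) - 529 = 120) ∧
      -- the progression is non-constant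
      ¬ ((49 : ℝ) = 169 ∧ (169 : ℝ) = 289 ∧ (289 : ℝ) = 409 ∧ (409 : ℝ) = 529 ∧
        (529 : ℝ) = 649) ∧
      -- {7, 13, 17, √409, 23, √649} lies in no proper subfield of K
      (∀ F : Subfield K409649, (7 : K409649) ∈ F → (13 : K409649) ∈ F → (17 : K409649) ∈ F →
        (⟨Real.sqrt 409, h409⟩ : K409649) ∈ F → (23 : K409649) ∈ F →
        (⟨Real.sqrt 649, h649⟩ : K409649) ∈ F → F = ⊤) ∧
      -- K is a quadratic extension of ℚ(√409): it contains ℚ(√409), has degree 4 over ℚ,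
      -- and ℚ(√409) has degree 2 over ℚ
      ℚ⟮Real.sqrt 409⟯ ≤ K409649 ∧ Module.finrank ℚ K409649 = 4 ∧
        Module.finrank ℚ ℚ⟮Real.sqrt 409⟯ = 2 := by
  have h409 : Real.sqrt 409 ∈ K409649 :=
    IntermediateField.subset_adjoin ℚ _ (Or.inl rfl)
  have h649 : Real.sqrt 649 ∈ K409649 :=
    IntermediateField.subset_adjoin ℚ _ (Or.inr rfl)
  refine ⟨h409, h649, ?_, ?_, ?_, ?_, ?_, ?_, ?_⟩
  · exact ⟨by norm_num, by norm_num, by norm_num, sq409', by norm_num,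
      Real.sq_sqrt (by norm_num)⟩
  · norm_num
  · norm_num
  · intro F _ _ _ ha _ hb
    exact Ftop' h409 h649 F ha hb
  · rw [show K409649 = IntermediateField.adjoin ℚ {Real.sqrt 409, Real.sqrt 649} from rfl]
    exact IntermediateField.adjoin.mono ℚ _ _ (by simp)
  · exact finrankK'
  · exact finrank409'
end
end
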